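/- arXiv:2603.24706 — 7 statements merged into one kernel-verified Lean document; each statement's English description precedes it below -/
import Mathlib

section
/- Let X be a set and let 𝒜, ℬ, 𝒞, 𝒟 be four families of subsets of X. Suppose that X is (𝒜,ℬ)-thick, that every A ∈ 𝒜 is (𝒞,𝒟)-thick, and that whenever two sets C, C′ ∈ 𝒞 have nonempty intersection, the intersection C ∩ C′ contains some member of ℬ ∪ 𝒟 as a subset. Then X is (𝒞, ℬ ∪ 𝒟)-thick. -/
/-- A subset `E ⊆ X` is `(𝒜,ℬ)`-thick if any two points of `E` are joined by a finite
chain of members of `𝒜`, consecutive intersections containing a member of `ℬ`. -/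
def IsThick {X : Type*} (𝒜 ℬ : Set (Set X)) (E : Set X) : Prop :=
  ∀ x ∈ E, ∀ y ∈ E, ∃ (n : ℕ) (A : Fin (n + 1) → Set X),
    (∀ i, A i ∈ 𝒜) ∧ x ∈ A 0 ∧ y ∈ A (Fin.last n) ∧
    ∀ i : Fin n, ∃ B ∈ ℬ, B ⊆ A i.castSucc ∩ A i.succ

/-!
Join the points `x` and `y` by an `(𝒜,ℬ)`-chain `A₀, …, Aₙ`. Each `Aᵢ` is `(𝒞,𝒟)`-thick, so
any two of its points are joined by a `(𝒞,𝒟)`-chain, and chains meeting in a point can be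
concatenated because intersecting members of `𝒞` are linked by `ℬ ∪ 𝒟`. Walking along the
`Aᵢ` through a point of the member of `ℬ` inside `Aᵢ ∩ Aᵢ₊₁` joins `x` to every point of every
`Aᵢ`. When that member of `ℬ` is empty there is no such point, but then `∅ ∈ ℬ ∪ 𝒟` links any
two members of `𝒞` outright.
-/

open Relation

theorem Relation.reflTransGen_iff_exists_fin {α : Type*} {r : α → α → Prop} {a b : α} :
    ReflTransGen r a b ↔ ∃ (n : ℕ) (f : Fin (n + 1) → α),
      f 0 = a ∧ f (Fin.last n) = b ∧ ∀ i : Fin n, r (f i.castSucc) (f i.succ) := by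
  constructor
  · intro h
    induction h using ReflTransGen.head_induction_on with
    | refl => exact ⟨0, fun _ => b, rfl, rfl, Fin.elim0⟩
    | head hac _ ih =>
      obtain ⟨n, f, hf0, hlast, hf⟩ := ih
      refine ⟨n + 1, Fin.cons _ f, rfl, by rwa [← Fin.succ_last, Fin.cons_succ], ?_⟩
      refine Fin.cases (by simpa [hf0] using hac) fun i => ?_
      simpa only [← Fin.succ_castSucc, Fin.cons_succ] using hf i
  · rintro ⟨n, f, rfl, rfl, hf⟩
    have reach : ∀ i, ReflTransGen r (f 0) (f i) :=
      Fin.induction .refl fun i ih => ih.tail (hf i)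
    exact reach _

section Thick

variable {X : Type*}

def Linked (ℬ : Set (Set X)) (C C' : Set X) : Prop :=
  ∃ B ∈ ℬ, B ⊆ C ∩ C'

def ChainConnected (𝒞 ℰ : Set (Set X)) (x y : X) : Prop :=
  ∃ C C' : 𝒞, x ∈ (C : Set X) ∧ y ∈ (C' : Set X) ∧
    ReflTransGen (fun C C' : 𝒞 => Linked ℰ C C') C C'

theorem isThick_iff_forall_chainConnected {𝒞 ℰ : Set (Set X)} {E : Set X} :
    IsThick 𝒞 ℰ E ↔ ∀ x ∈ E, ∀ y ∈ E, ChainConnected 𝒞 ℰ x y := by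
  refine forall₄_congr fun x _ y _ => ⟨?_, ?_⟩
  · rintro ⟨n, A, hA, hx, hy, hlink⟩
    exact ⟨_, _, hx, hy, reflTransGen_iff_exists_fin.2 ⟨n, fun i => ⟨A i, hA i⟩, rfl, rfl, hlink⟩⟩
  · rintro ⟨C, C', hx, hy, hCC'⟩
    obtain ⟨n, f, rfl, rfl, hf⟩ := reflTransGen_iff_exists_fin.1 hCC'
    exact ⟨n, fun i => f i, fun i => (f i).2, hx, hy, hf⟩

namespace ChainConnected

variable {𝒞 ℰ : Set (Set X)} {x y z : X}

theorem mono {ℰ' : Set (Set X)} (hℰ : ℰ ⊆ ℰ') (h : ChainConnected 𝒞 ℰ x y) :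
    ChainConnected 𝒞 ℰ' x y := by
  obtain ⟨C, C', hx, hy, hCC'⟩ := h
  exact ⟨C, C', hx, hy, ReflTransGen.mono (fun _ _ ⟨B, hB, hBC⟩ => ⟨B, hℰ hB, hBC⟩) _ _ hCC'⟩

theorem trans (h𝒞 : ∀ C ∈ 𝒞, ∀ C' ∈ 𝒞, (C ∩ C').Nonempty → Linked ℰ C C')
    (hxy : ChainConnected 𝒞 ℰ x y) (hyz : ChainConnected 𝒞 ℰ y z) :
    ChainConnected 𝒞 ℰ x z := by
  obtain ⟨C₁, C₂, hx, hy, h₁₂⟩ := hxy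
  obtain ⟨C₃, C₄, hy', hz, h₃₄⟩ := hyz
  have h₂₃ : Linked ℰ C₂ C₃ := h𝒞 _ C₂.2 _ C₃.2 ⟨y, hy, hy'⟩
  exact ⟨C₁, C₄, hx, hz, h₁₂.trans (h₃₄.head h₂₃)⟩

theorem of_empty_mem (h : ∅ ∈ ℰ) {x' y' : X} (hx : ChainConnected 𝒞 ℰ x x')
    (hy : ChainConnected 𝒞 ℰ y' y) : ChainConnected 𝒞 ℰ x y := by
  obtain ⟨C₁, -, hx, -, -⟩ := hx
  obtain ⟨-, C₂, -, hy, -⟩ := hy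
  exact ⟨C₁, C₂, hx, hy, .single ⟨∅, h, Set.empty_subset _⟩⟩

end ChainConnected

end Thick

/-- Transitivity of thickness: if `X` is `(𝒜,ℬ)`-thick, every `A ∈ 𝒜` is `(𝒞,𝒟)`-thick,
and intersecting members of `𝒞` always contain a member of `ℬ ∪ 𝒟` in their intersection,
then `X` is `(𝒞, ℬ ∪ 𝒟)`-thick. -/
theorem thickness_transitivity {X : Type*} (𝒜 ℬ 𝒞 𝒟 : Set (Set X))
    (h1 : IsThick 𝒜 ℬ (Set.univ : Set X))
    (h2 : ∀ A ∈ 𝒜, IsThick 𝒞 𝒟 A)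
    (h3 : ∀ C ∈ 𝒞, ∀ C' ∈ 𝒞, (C ∩ C').Nonempty → ∃ B ∈ ℬ ∪ 𝒟, B ⊆ C ∩ C') :
    IsThick 𝒞 (ℬ ∪ 𝒟) (Set.univ : Set X) := by
  have within : ∀ A ∈ 𝒜, ∀ a ∈ A, ∀ a' ∈ A, ChainConnected 𝒞 (ℬ ∪ 𝒟) a a' :=
    fun A hA a ha a' ha' =>
      (isThick_iff_forall_chainConnected.1 (h2 A hA) a ha a' ha').mono Set.subset_union_right
  rw [isThick_iff_forall_chainConnected]
  intro x _ y _
  obtain ⟨n, A, hA, hx, hy, hlink⟩ := h1 x trivial y trivial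
  have along : ∀ i, ∀ a ∈ A i, ChainConnected 𝒞 (ℬ ∪ 𝒟) x a := by
    refine Fin.induction (within _ (hA 0) x hx) fun i ih a ha => ?_
    obtain ⟨B, hBℬ, hB⟩ := hlink i
    rcases B.eq_empty_or_nonempty with rfl | ⟨b, hb⟩
    · exact .of_empty_mem (.inl hBℬ) (within _ (hA 0) x hx x hx) (within _ (hA _) a ha a ha)
    · exact (ih b (hB hb).1).trans h3 (within _ (hA _) b (hB hb).2 a ha)
  exact along _ y hy
end

section
/- Let G be a group generated by a subset S ⊆ G, and let H ≤ G be a subgroup. Set T := S ∪ S⁻¹ ∪ {1}, let 𝒜 := { gHT : g ∈ G } (where gHT = { ght : h ∈ H, t ∈ T }, the 1-neighborhood of the coset gH in the word metric associated to S), and let ℬ := { g(H ∩ sHs⁻¹) : g ∈ G, s ∈ S } be the family of left cosets of the subgroups Kₛ = H ∩ sHs⁻¹ for s ∈ S. Then G is (𝒜,ℬ)-thick: for all x, y ∈ G there exist A₁, …, Aₙ ∈ 𝒜 with x ∈ A₁, y ∈ Aₙ, and for each 1 ≤ i ≤ n−1 the intersection Aᵢ ∩ Aᵢ₊₁ contains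 some member of ℬ as a subset. -/
open Relation

theorem Relation.ReflTransGen.exists_relSeries {α : Type*} {r : α → α → Prop} {a b : α}
    (h : ReflTransGen r a b) :
    ∃ p : RelSeries {q : α × α | r q.1 q.2}, p.head = a ∧ p.last = b := by
  induction h with
  | refl => exact ⟨RelSeries.singleton _ a, rfl, rfl⟩
  | tail _ hcd ih =>
    obtain ⟨p, rfl, rfl⟩ := ih
    exact ⟨p.snoc _ hcd, p.head_snoc _ hcd, p.last_snoc _ hcd⟩

section Bridged

variable {X ι : Type*}

def Bridged (ℬ : Set (Set X)) (N : ι → Set X) (i j : ι) : Prop :=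
  ∃ B ∈ ℬ, B ⊆ N i ∩ N j

theorem Bridged.symm {ℬ : Set (Set X)} {N : ι → Set X} {i j : ι} (h : Bridged ℬ N i j) :
    Bridged ℬ N j i :=
  let ⟨B, hB, hBN⟩ := h
  ⟨B, hB, Set.inter_comm (N i) (N j) ▸ hBN⟩

theorem isThick_of_reflTransGen_bridged {𝒜 ℬ : Set (Set X)} {E : Set X} (N : ι → Set X)
    (hN : ∀ i, N i ∈ 𝒜)
    (h : ∀ x ∈ E, ∀ y ∈ E, ∃ i j, x ∈ N i ∧ y ∈ N j ∧ ReflTransGen (Bridged ℬ N) i j) :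
    IsThick 𝒜 ℬ E := by
  intro x hx y hy
  obtain ⟨i, j, hxi, hyj, hij⟩ := h x hx y hy
  obtain ⟨p, rfl, rfl⟩ := hij.exists_relSeries
  exact ⟨p.length, N ∘ p, fun k => hN (p k), hxi, hyj, p.step⟩

end Bridged

namespace Subgroup

variable {G : Type*} [Group G] (S : Set G) (H : Subgroup G)

/-- The `1`-neighbourhood `gHT` of the coset `gH` in the word metric of `S`. -/
def cosetNbhd (g : G) : Set G :=
  {x : G | ∃ h ∈ H, ∃ t ∈ S ∪ S⁻¹ ∪ {(1 : G)}, x = g * h * t}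

/-- The left cosets `g (H ∩ sHs⁻¹)`, `s ∈ S`; `k ∈ sHs⁻¹` is written `s⁻¹ * k * s ∈ H`. -/
def cosetsInfConj : Set (Set G) :=
  {B : Set G | ∃ g : G, ∃ s ∈ S, B = {x : G | ∃ k : G, x = g * k ∧ k ∈ H ∧ s⁻¹ * k * s ∈ H}}

theorem self_mem_cosetNbhd (g : G) : g ∈ cosetNbhd S H g :=
  ⟨1, H.one_mem, 1, Or.inr rfl, by group⟩

variable {S}

theorem bridged_cosetNbhd_mul {s : G} (hs : s ∈ S) (g : G) :
    Bridged (cosetsInfConj S H) (cosetNbhd S H) g (g * s) := by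
  refine ⟨_, ⟨g, s, hs, rfl⟩, ?_⟩
  rintro x ⟨k, rfl, hk, hsk⟩
  exact ⟨⟨k, hk, 1, Or.inr rfl, by group⟩,
    ⟨s⁻¹ * k * s, hsk, s⁻¹, Or.inl (Or.inr (Set.inv_mem_inv.mpr hs)), by group⟩⟩

theorem reflTransGen_bridged_cosetNbhd (hS : closure S = ⊤) (x y : G) :
    ReflTransGen (Bridged (cosetsInfConj S H) (cosetNbhd S H)) x y := by
  have key : ∀ g ∈ closure S,
      ReflTransGen (Bridged (cosetsInfConj S H) (cosetNbhd S H)) x (x * g) := by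
    intro g hg
    induction hg using closure_induction_right with
    | one => rw [mul_one]
    | mul_right g _ s hs ih =>
      exact ih.tail (mul_assoc x g s ▸ bridged_cosetNbhd_mul H hs (x * g))
    | mul_inv_cancel g _ s hs ih =>
      refine ih.tail (Bridged.symm ?_)
      simpa [mul_assoc] using bridged_cosetNbhd_mul H hs (x * (g * s⁻¹))
  simpa using key (x⁻¹ * y) (hS ▸ mem_top _)

end Subgroup

/-- Let `G` be a group generated by `S` and `H ≤ G` a subgroup. With
`T = S ∪ S⁻¹ ∪ {1}`, `𝒜 = { gHT : g ∈ G }` (the `1`-neighbourhoods of left cosets of `H`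
in the word metric of `S`) and `ℬ = { g (H ∩ sHs⁻¹) : g ∈ G, s ∈ S }`, the group `G` is
`(𝒜,ℬ)`-thick. -/
theorem thick_family_left_cosets {G : Type*} [Group G] (S : Set G)
    (hS : Subgroup.closure S = ⊤) (H : Subgroup G) :
    IsThick
      {A : Set G | ∃ g : G, A = {x : G | ∃ h ∈ H, ∃ t ∈ S ∪ S⁻¹ ∪ {(1 : G)}, x = g * h * t}}
      {B : Set G | ∃ g : G, ∃ s ∈ S, B = {x : G | ∃ k : G, x = g * k ∧ k ∈ H ∧ s⁻¹ * k * s ∈ H}}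
      (Set.univ : Set G) :=
  isThick_of_reflTransGen_bridged (Subgroup.cosetNbhd S H) (fun g => ⟨g, rfl⟩) fun x _ y _ =>
    ⟨x, y, Subgroup.self_mem_cosetNbhd S H x, Subgroup.self_mem_cosetNbhd S H y,
      Subgroup.reflTransGen_bridged_cosetNbhd H hS x y⟩
end

section
/- Let G be a group, let A₁, A₂ ≤ G be two subgroups that together generate G, and let B be a subgroup with B ≤ A₁ ∩ A₂ (for example, G = A₁ ∗_B A₂ an amalgamated free product). Let 𝒜 be the family of all left cosets gA₁ and gA₂ for g ∈ G, and let ℬ be the family of all left cosets gB for g ∈ G. Then G is (𝒜,ℬ)-thick. -/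
/-!
Call two points adjacent if some coset of `A₁` or `A₂` contains both. Any two such cosets
through a common point `w` both contain `w B`, so every path of adjacent points yields a chain
in the sense of thickness. Adjacency is invariant under left translation and joins `1` to every
element of `A₁ ∪ A₂`, so the points reachable from `1` are closed under left multiplication by
generators and hence exhaust `G = ⟨A₁ ∪ A₂⟩`; translating by `x` joins any `x` to any `y`.
-/

open Pointwise

open Relation

section Chains

variable {X : Type*} (𝒜 ℬ : Set (Set X))

def Chained (x y : X) : Prop :=
  ∃ (n : ℕ) (A : Fin (n + 1) → Set X),
    (∀ i, A i ∈ 𝒜) ∧ x ∈ A 0 ∧ y ∈ A (Fin.last n) ∧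
    ∀ i : Fin n, ∃ B ∈ ℬ, B ⊆ A i.castSucc ∩ A i.succ

def Adjacent (x y : X) : Prop :=
  ∃ S ∈ 𝒜, x ∈ S ∧ y ∈ S

variable {𝒜 ℬ}

theorem isThick_iff_chained {E : Set X} : IsThick 𝒜 ℬ E ↔ ∀ x ∈ E, ∀ y ∈ E, Chained 𝒜 ℬ x y :=
  Iff.rfl

theorem chained_of_mem {S : Set X} (hS : S ∈ 𝒜) {x y : X} (hx : x ∈ S) (hy : y ∈ S) :
    Chained 𝒜 ℬ x y :=
  ⟨0, fun _ => S, fun _ => hS, hx, hy, fun i => i.elim0⟩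

theorem Chained.snoc (hℬ : ∀ S ∈ 𝒜, ∀ T ∈ 𝒜, (S ∩ T).Nonempty → ∃ B ∈ ℬ, B ⊆ S ∩ T)
    {x y z : X} (hxy : Chained 𝒜 ℬ x y) {S : Set X} (hS : S ∈ 𝒜) (hy : y ∈ S) (hz : z ∈ S) :
    Chained 𝒜 ℬ x z := by
  obtain ⟨n, A, hA, hx, hyA, hlink⟩ := hxy
  refine ⟨n + 1, Fin.snoc A S, Fin.lastCases (by simpa using hS) (by simpa using hA),
    by simpa using hx, by simpa using hz, Fin.lastCases ?_ fun i => ?_⟩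
  · simpa only [Fin.succ_last, Fin.snoc_castSucc, Fin.snoc_last] using
      hℬ _ (hA _) _ hS ⟨y, hyA, hy⟩
  · rw [Fin.succ_castSucc]
    simpa only [Fin.snoc_castSucc] using hlink i

theorem Relation.TransGen.chained
    (hℬ : ∀ S ∈ 𝒜, ∀ T ∈ 𝒜, (S ∩ T).Nonempty → ∃ B ∈ ℬ, B ⊆ S ∩ T)
    {x y : X} (h : TransGen (Adjacent 𝒜) x y) : Chained 𝒜 ℬ x y := by
  induction h with
  | single hxy => obtain ⟨S, hS, hx, hy⟩ := hxy; exact chained_of_mem hS hx hy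
  | tail _ hyz ih => obtain ⟨S, hS, hy, hz⟩ := hyz; exact ih.snoc hℬ hS hy hz

end Chains

section Groups

variable {G : Type*} [Group G]

theorem reflTransGen_one_of_mem_closure {R : G → G → Prop}
    (hR : ∀ g x y, R x y → R (g * x) (g * y)) {s : Set G} (hs : ∀ a ∈ s, R 1 a ∧ R 1 a⁻¹)
    {g : G} (hg : g ∈ Subgroup.closure s) : ReflTransGen R 1 g := by
  induction hg using Subgroup.closure_induction_left with
  | one => exact ReflTransGen.refl
  | mul_left a ha y _ ih =>
    have hlift : ReflTransGen R (a * 1) (a * y) := ih.lift (a * ·) (hR a) 1 y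
    exact ReflTransGen.head (hs a ha).1 (by rwa [mul_one] at hlift)
  | inv_mul_cancel a ha y _ ih =>
    have hlift : ReflTransGen R (a⁻¹ * 1) (a⁻¹ * y) := ih.lift (a⁻¹ * ·) (hR a⁻¹) 1 y
    exact ReflTransGen.head (hs a ha).2 (by rwa [mul_one] at hlift)

theorem Adjacent.mul_left {𝒜 : Set (Set G)} (h𝒜 : ∀ g : G, ∀ S ∈ 𝒜, g • S ∈ 𝒜) (g : G) {x y : G}
    (h : Adjacent 𝒜 x y) : Adjacent 𝒜 (g * x) (g * y) := by
  obtain ⟨S, hS, hx, hy⟩ := h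
  exact ⟨g • S, h𝒜 g S hS, Set.smul_mem_smul_set hx, Set.smul_mem_smul_set hy⟩

theorem smul_subgroup_subset_of_mem_leftCoset {H K : Subgroup G} (hKH : K ≤ H) {g w : G}
    (hw : w ∈ g • (H : Set G)) : w • (K : Set G) ⊆ g • (H : Set G) := by
  have hcoset : w • (H : Set G) = g • (H : Set G) := by
    rw [leftCoset_eq_iff, ← inv_inv (w⁻¹ * g), mul_inv_rev, inv_inv]
    exact H.inv_mem ((mem_leftCoset_iff g).mp hw)
  exact hcoset ▸ Set.smul_set_mono hKH

theorem isThick_univ_of_closure_eq_top {𝒜 ℬ : Set (Set G)} (h𝒜 : ∀ g : G, ∀ S ∈ 𝒜, g • S ∈ 𝒜)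
    (hℬ : ∀ S ∈ 𝒜, ∀ T ∈ 𝒜, (S ∩ T).Nonempty → ∃ B ∈ ℬ, B ⊆ S ∩ T)
    (h1 : ∃ S ∈ 𝒜, (1 : G) ∈ S) {s : Set G} (hs : Subgroup.closure s = ⊤)
    (hadj : ∀ a ∈ s, Adjacent 𝒜 1 a ∧ Adjacent 𝒜 1 a⁻¹) : IsThick 𝒜 ℬ Set.univ := by
  have hR (g : G) : ∀ x y, Adjacent 𝒜 x y → Adjacent 𝒜 (g * x) (g * y) :=
    fun _ _ => Adjacent.mul_left h𝒜 g
  have hreach (g : G) : TransGen (Adjacent 𝒜) 1 g := by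
    obtain ⟨S, hS, h1S⟩ := h1
    exact TransGen.head' ⟨S, hS, h1S, h1S⟩
      (reflTransGen_one_of_mem_closure hR hadj (hs ▸ Subgroup.mem_top g))
  rw [isThick_iff_chained]
  intro x _ y _
  have hxy : TransGen (Adjacent 𝒜) (x * 1) (x * (x⁻¹ * y)) := (hreach _).lift (x * ·) (hR x) 1 _
  rw [mul_one, mul_inv_cancel_left] at hxy
  exact hxy.chained hℬ

end Groups

/-- If `G` is generated by two subgroups `A₁, A₂` and `B ≤ A₁ ∩ A₂`, then `G` is
`(𝒜,ℬ)`-thick where `𝒜` is the family of left cosets of `A₁` and `A₂`, and `ℬ` is the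
family of left cosets of `B`. -/
theorem thick_amalgam {G : Type*} [Group G] (A₁ A₂ B : Subgroup G)
    (hgen : A₁ ⊔ A₂ = ⊤) (hB : B ≤ A₁ ⊓ A₂) :
    IsThick
      {S : Set G | ∃ g : G, S = g • (A₁ : Set G) ∨ S = g • (A₂ : Set G)}
      {S : Set G | ∃ g : G, S = g • (B : Set G)}
      (Set.univ : Set G) := by
  set 𝒜 : Set (Set G) := {S | ∃ g : G, S = g • (A₁ : Set G) ∨ S = g • (A₂ : Set G)}
  have h𝒜 : ∀ g : G, ∀ S ∈ 𝒜, g • S ∈ 𝒜 := by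
    rintro g _ ⟨h, rfl | rfl⟩
    exacts [⟨g * h, Or.inl (smul_smul g h _)⟩, ⟨g * h, Or.inr (smul_smul g h _)⟩]
  have hBsub : ∀ S ∈ 𝒜, ∀ w ∈ S, w • (B : Set G) ⊆ S := by
    rintro _ ⟨g, rfl | rfl⟩ w hw
    exacts [smul_subgroup_subset_of_mem_leftCoset (hB.trans inf_le_left) hw,
      smul_subgroup_subset_of_mem_leftCoset (hB.trans inf_le_right) hw]
  have hA₁ : (A₁ : Set G) ∈ 𝒜 := ⟨1, Or.inl (one_smul G _).symm⟩
  have hA₂ : (A₂ : Set G) ∈ 𝒜 := ⟨1, Or.inr (one_smul G _).symm⟩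
  refine isThick_univ_of_closure_eq_top h𝒜 ?_ ⟨_, hA₁, A₁.one_mem⟩
    (s := (A₁ : Set G) ∪ A₂)
    (by rw [Subgroup.closure_union, Subgroup.closure_eq, Subgroup.closure_eq, hgen]) ?_
  · rintro S hS T hT ⟨w, hwS, hwT⟩
    exact ⟨w • (B : Set G), ⟨w, rfl⟩, Set.subset_inter (hBsub S hS w hwS) (hBsub T hT w hwT)⟩
  · rintro a (ha | ha)
    exacts [⟨⟨_, hA₁, A₁.one_mem, ha⟩, ⟨_, hA₁, A₁.one_mem, A₁.inv_mem ha⟩⟩,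
      ⟨⟨_, hA₂, A₂.one_mem, ha⟩, ⟨_, hA₂, A₂.one_mem, A₂.inv_mem ha⟩⟩]
end

section
/- Let σ : ℕ → ℕ be a subexponential function, let ρ : [0,∞) → [0,∞) be an increasing unbounded function, and let λ ≥ 1, c ≥ 0, N ∈ ℕ be constants. Then there exists Q ≥ 0 with the following property. Let X be a connected simple graph all of whose vertex degrees are at most N, let Z be a set of vertices of X such that |B(p,R) ∩ Z| ≤ σ(R) for every vertex p and every R ∈ ℕ, and let φ be a map from the vertices of the rooted binary tree T₂ to the vertices of X satisfying ρ(d_T(u,v)) ≤ d(φ(u), φ(v)) ≤ λ·d_T(u,v) + c for all vertices u, v of T₂. If d(φ(o), Z) ≥ Q, then there exists an infinite binary word f : ℕ → {0,1} such that, writing p_n for the length-n prefix of f, one has φ(p_n) ∉ Z for every n ∈ ℕ and the distances d(φ(p_n), Z) are unbounded as n ranges over ℕ. -/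
def commonPrefixLen : List Bool → List Bool → ℕ
  | [], _ => 0
  | _ :: _, [] => 0
  | a :: u, b :: v => if a = b then commonPrefixLen u v + 1 else 0

/-- Graph distance in the rooted binary tree `T₂` whose vertices are finite binary words. -/
def treeDist (u v : List Bool) : ℕ :=
  u.length + v.length - 2 * commonPrefixLen u v

/-!
Below a vertex `u` of `T₂`, a word of depth `δ` that `φ` maps within `D` of `Z` is mapped within
`λδ + c + D` of `φ u`, hence near one of at most `σ(λδ + c + D)` points of `Z`; by the lower
control `ρ`, the words near a single point share all but their last `O_D(1)` letters. As `σ` is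
subexponential, such words form a fraction of the `2^δ` words of depth `δ` that is summable in
`δ`. So once `φ u` is too far from `Z` for the first `K` levels below `u` to reach it, most long
extensions of `u` avoid `Z` all along and end arbitrarily far from `Z`; iterating this from the
root yields the ray.
-/

open Finset

lemma commonPrefixLen_le_length_left : ∀ u v : List Bool, commonPrefixLen u v ≤ u.length
  | [], _ => by simp [commonPrefixLen]
  | _ :: _, [] => by simp [commonPrefixLen]
  | a :: u, b :: v => by
      by_cases h : a = b <;> simp [commonPrefixLen, h, commonPrefixLen_le_length_left u v]

lemma getElem?_eq_of_lt_commonPrefixLen :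
    ∀ {u v : List Bool} {i : ℕ}, i < commonPrefixLen u v → u[i]? = v[i]?
  | [], _, _, h => by simp [commonPrefixLen] at h
  | _ :: _, [], _, h => by simp [commonPrefixLen] at h
  | a :: u, b :: v, i, h => by
      by_cases hab : a = b
      · cases i with
        | zero => simp [hab]
        | succ i =>
          simp only [commonPrefixLen, hab, if_true, Nat.add_lt_add_iff_right] at h
          simpa using getElem?_eq_of_lt_commonPrefixLen h
      · simp [commonPrefixLen, hab] at h

lemma commonPrefixLen_append_left (v w : List Bool) :
    ∀ u : List Bool, commonPrefixLen (u ++ v) (u ++ w) = u.length + commonPrefixLen v w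
  | [] => by simp
  | a :: u => by simp [commonPrefixLen, commonPrefixLen_append_left v w u]; omega

lemma treeDist_append_left (u v w : List Bool) : treeDist (u ++ v) (u ++ w) = treeDist v w := by
  simp only [treeDist, List.length_append, commonPrefixLen_append_left]
  omega

lemma treeDist_self_append (u w : List Bool) : treeDist u (u ++ w) = w.length := by
  simpa [treeDist, commonPrefixLen] using treeDist_append_left u [] w

lemma getElem?_eq_of_treeDist_lt {u v : List Bool} {s i : ℕ} (huv : u.length = v.length)
    (h : treeDist u v < s) (hi : i < u.length - s) : u[i]? = v[i]? := by
  have := commonPrefixLen_le_length_left u v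
  unfold treeDist at h
  exact getElem?_eq_of_lt_commonPrefixLen (by omega)

lemma eq_of_treeDist_append_take_ofFn_lt {u : List Bool} {n δ s : ℕ} {a b : Fin n → Bool}
    (hδ : δ ≤ n) (h : treeDist (u ++ (List.ofFn a).take δ) (u ++ (List.ofFn b).take δ) < s)
    (i : Fin n) (hi : (i : ℕ) < δ - s) : a i = b i := by
  rw [treeDist_append_left] at h
  have := getElem?_eq_of_treeDist_lt (i := i) (by simp) h (by simpa [hδ] using hi)
  simpa [show (i : ℕ) < δ by omega] using this

lemma card_le_pow_of_eqOn_lt {α : Type*} [Fintype α] {n m : ℕ} (S : Finset (Fin n → α))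
    (hS : ∀ a ∈ S, ∀ b ∈ S, ∀ i : Fin n, (i : ℕ) < m → a i = b i) :
    #S ≤ Fintype.card α ^ (n - m) := by
  classical
  calc #S ≤ #(univ : Finset (Fin (n - m) → α)) := by
        refine card_le_card_of_injOn (fun a j => a ⟨m + j, by omega⟩)
          (fun _ _ => mem_coe.2 (mem_univ _)) fun a ha b hb hab => funext fun i => ?_
        by_cases hi : (i : ℕ) < m
        · exact hS a ha b hb i hi
        · have := congrFun hab ⟨i - m, by omega⟩
          simpa [show m + (i - m) = i by omega] using this
    _ = Fintype.card α ^ (n - m) := by simp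

lemma forall_take_append {α : Type*} {P : List α → Prop} {u x : List α}
    (hu : ∀ k, P (u.take k)) (hx : ∀ k, P (u ++ x.take k)) : ∀ k, P ((u ++ x).take k) := by
  intro k
  rw [List.take_append]
  rcases le_or_gt k u.length with hk | hk
  · simpa [Nat.sub_eq_zero_of_le hk] using hu k
  · simpa [List.take_of_length_le hk.le] using hx (k - u.length)

lemma exists_ray_of_forall_exists_append {α : Type*} [Inhabited α] (P : ℕ → List α → Prop)
    (h0 : P 0 []) (h : ∀ j w, P j w → ∃ x ≠ [], P (j + 1) (w ++ x)) :
    ∃ f : ℕ → α, ∀ j, ∃ n ≥ j, P j (List.ofFn fun i : Fin n => f i) := by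
  choose! x hx_ne hx using h
  let U : ℕ → List α := fun j => Nat.rec [] (fun j w => w ++ x j w) j
  have hP : ∀ j, P j (U j) := fun j => Nat.rec h0 (fun j ih => hx j _ ih) j
  have hlen : ∀ j, j ≤ (U j).length := fun j => by
    induction j with
    | zero => simp
    | succ j ih =>
      have := List.length_pos_iff.2 (hx_ne j _ (hP j))
      change j + 1 ≤ (U j ++ x j (U j)).length
      rw [List.length_append]
      omega
  have hprefix : ∀ j k, j ≤ k → U j <+: U k := fun j k hjk => by
    induction k, hjk using Nat.le_induction with
    | base => exact List.prefix_refl _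
    | succ k _ ih => exact ih.trans (List.prefix_append _ _)
  refine ⟨fun i => (U (i + 1)).getD i default, fun j => ⟨(U j).length, hlen j, ?_⟩⟩
  convert hP j using 1
  refine List.ext_getElem (by simp) fun i hi hi' => ?_
  have hi1 : i < (U (i + 1)).length := (hlen (i + 1)).trans_lt' (Nat.lt_succ_self i)
  simp only [List.getElem_ofFn, List.getD_eq_getElem _ _ hi1]
  rcases le_total (i + 1) j with hij | hji
  · exact (hprefix _ _ hij).getElem hi1
  · exact ((hprefix _ _ hji).getElem hi').symm

def Subexponential (σ : ℕ → ℕ) : Prop :=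
  ∀ ε : ℝ, 0 < ε → ∃ R₀ : ℕ, ∀ R : ℕ, R₀ ≤ R → (σ R : ℝ) ≤ Real.exp (ε * R)

namespace Subexponential

variable {σ : ℕ → ℕ}

lemma exists_le_mul_exp (hσ : Subexponential σ) {ε : ℝ} (hε : 0 < ε) :
    ∃ C : ℝ, ∀ R : ℕ, (σ R : ℝ) ≤ C * Real.exp (ε * R) := by
  obtain ⟨R₀, hR₀⟩ := hσ ε hε
  refine ⟨1 + ∑ R ∈ range R₀, (σ R : ℝ), fun R => ?_⟩
  have hsum : 0 ≤ ∑ R ∈ range R₀, (σ R : ℝ) := by positivity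
  have hexp : 1 ≤ Real.exp (ε * R) := Real.one_le_exp (by positivity)
  rcases lt_or_ge R R₀ with hR | hR
  · have := single_le_sum (fun R _ => (σ R).cast_nonneg (α := ℝ)) (mem_range.2 hR)
    nlinarith
  · nlinarith [hR₀ R hR]

lemma summable_div_two_pow (hσ : Subexponential σ) (L E : ℕ) :
    Summable fun δ : ℕ => (σ (L * δ + E) : ℝ) / 2 ^ δ := by
  have hlog : 0 < Real.log (3 / 2) := Real.log_pos (by norm_num)
  set ε := Real.log (3 / 2) / (L + 1)
  obtain ⟨C, hC⟩ := hσ.exists_le_mul_exp (show 0 < ε by positivity)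
  have hC0 : 0 ≤ C := by simpa using (σ 0).cast_nonneg.trans (hC 0)
  -- `ε` is chosen so that `σ (L * δ + E)` grows at most like `(3 / 2) ^ δ`
  have hεL : Real.exp (ε * L) ≤ 3 / 2 := by
    calc Real.exp (ε * L) ≤ Real.exp (Real.log (3 / 2)) := by
          refine Real.exp_le_exp.2 ?_
          rw [div_mul_eq_mul_div, div_le_iff₀ (by positivity)]
          nlinarith
      _ = 3 / 2 := Real.exp_log (by norm_num)
  refine Summable.of_nonneg_of_le (fun δ => by positivity) (fun δ => ?_)
    ((summable_geometric_of_lt_one (r := 3 / 4) (by norm_num) (by norm_num)).mul_left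
      (C * Real.exp (ε * E)))
  calc (σ (L * δ + E) : ℝ) / 2 ^ δ ≤ C * Real.exp (ε * ↑(L * δ + E)) / 2 ^ δ := by
        gcongr
        exact hC _
    _ = C * Real.exp (ε * E) * (Real.exp (ε * L) ^ δ / 2 ^ δ) := by
        have : Real.exp (ε * ↑(L * δ + E)) = Real.exp (ε * E) * Real.exp (ε * L) ^ δ := by
          rw [← Real.exp_nat_mul, ← Real.exp_add]
          push_cast
          ring_nf
        rw [this]
        ring
    _ ≤ C * Real.exp (ε * E) * ((3 / 2) ^ δ / 2 ^ δ) := by gcongr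
    _ = C * Real.exp (ε * E) * (3 / 4) ^ δ := by rw [← div_pow]; norm_num

end Subexponential

lemma exists_sum_lt_of_summable {f : ℕ → ℝ} (hf : Summable f) {η : ℝ} (hη : 0 < η) :
    ∃ K : ℕ, ∀ t : Finset ℕ, (∀ δ ∈ t, K < δ) → ∑ δ ∈ t, f δ < η := by
  obtain ⟨s, hs⟩ := summable_iff_vanishing_norm.1 hf η hη
  refine ⟨s.sup id, fun t ht => (le_abs_self _).trans_lt (hs t ?_)⟩
  exact disjoint_left.2 fun δ hδt hδs => (ht δ hδt).not_ge (le_sup (f := id) hδs)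

lemma SimpleGraph.Connected.finite_setOf_dist_le {V : Type*} {X : SimpleGraph V}
    (hX : X.Connected) (hfin : ∀ v, (X.neighborSet v).Finite) (p : V) :
    ∀ R : ℕ, {x | X.dist p x ≤ R}.Finite
  | 0 => (Set.finite_singleton p).subset fun x hx => by
      simpa [eq_comm] using hX.dist_eq_zero_iff.1 (Nat.le_zero.1 hx)
  | R + 1 => by
      refine ((hX.finite_setOf_dist_le hfin p R).biUnion fun y _ => (hfin y).insert y).subset ?_
      intro x hx
      obtain ⟨w, hw⟩ := hX.exists_walk_length_eq_dist x p
      rw [SimpleGraph.dist_comm] at hw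
      cases w with
      | nil => exact Set.mem_biUnion (by simp) (Set.mem_insert _ _)
      | @cons _ y _ hxy w =>
        refine Set.mem_biUnion (x := y) ?_ (Set.mem_insert_of_mem _ hxy.symm)
        have := SimpleGraph.dist_le w
        change X.dist p x ≤ R + 1 at hx
        rw [SimpleGraph.Walk.length_cons] at hw
        change X.dist p y ≤ R
        rw [SimpleGraph.dist_comm]
        omega

section CoarseEmbedding

variable {V : Type*} {X : SimpleGraph V} {Z : Set V} {φ : List Bool → V} {σ S : ℕ → ℕ}
  {L E K : ℕ}

open Classical in
noncomputable def nearWords (X : SimpleGraph V) (Z : Set V) (φ : List Bool → V) (u : List Bool)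
    (n δ D : ℕ) : Finset (Fin n → Bool) :=
  {a | ∃ z ∈ Z, X.dist (φ (u ++ (List.ofFn a).take δ)) z ≤ D}

variable (hX : X.Connected) (hfin : ∀ v, (X.neighborSet v).Finite)
  (hZ : ∀ (p : V) (R : ℕ), {x ∈ Z | X.dist p x ≤ R}.ncard ≤ σ R)
  (hup : ∀ u v, X.dist (φ u) (φ v) ≤ L * treeDist u v + E)
  (hlow : ∀ u v D, X.dist (φ u) (φ v) ≤ D → treeDist u v < S D)
include hX hfin hZ hup hlow

lemma card_nearWords_mul_le (u : List Bool) {n δ : ℕ} (hδ : δ ≤ n) (D : ℕ) :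
    #(nearWords X Z φ u n δ D) * 2 ^ δ ≤ 2 ^ (n + S (2 * D)) * σ (L * δ + E + D) := by
  classical
  set R := L * δ + E + D
  have hball : {x ∈ Z | X.dist (φ u) x ≤ R}.Finite :=
    (hX.finite_setOf_dist_le hfin (φ u) R).subset fun x hx => hx.2
  let near (z : V) : Finset (Fin n → Bool) :=
    {a | X.dist (φ (u ++ (List.ofFn a).take δ)) z ≤ D}
  have hcover : nearWords X Z φ u n δ D ⊆ hball.toFinset.biUnion near := by
    intro a ha
    obtain ⟨z, hz, hd⟩ := by simpa [nearWords] using ha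
    refine mem_biUnion.2 ⟨z, hball.mem_toFinset.2 ⟨hz, ?_⟩, by simpa [near] using hd⟩
    have hstep := hup u (u ++ (List.ofFn a).take δ)
    rw [treeDist_self_append, List.length_take, List.length_ofFn, min_eq_left hδ] at hstep
    have := hX.dist_triangle (u := φ u) (v := φ (u ++ (List.ofFn a).take δ)) (w := z)
    omega
  have hfiber (z : V) : #(near z) ≤ 2 ^ (n - (δ - S (2 * D))) := by
    simpa using card_le_pow_of_eqOn_lt (near z) fun a ha b hb =>
      eq_of_treeDist_append_take_ofFn_lt hδ <|
        hlow (u ++ (List.ofFn a).take δ) (u ++ (List.ofFn b).take δ) (2 * D) <| by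
        simp only [near, mem_filter, mem_univ, true_and] at ha hb
        have := hX.dist_triangle (u := φ (u ++ (List.ofFn a).take δ)) (v := z)
          (w := φ (u ++ (List.ofFn b).take δ))
        rw [SimpleGraph.dist_comm (u := z)] at this
        omega
  have hT : #hball.toFinset ≤ σ R := by
    rw [← Set.ncard_eq_toFinset_card _ hball]
    exact hZ _ _
  calc #(nearWords X Z φ u n δ D) * 2 ^ δ
      ≤ #hball.toFinset * 2 ^ (n - (δ - S (2 * D))) * 2 ^ δ := by
        gcongr
        exact (card_le_card hcover).trans (card_biUnion_le_card_mul _ _ _ fun z _ => hfiber z)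
    _ ≤ σ R * 2 ^ (n + S (2 * D)) := by
        rw [mul_assoc, ← pow_add]
        exact Nat.mul_le_mul hT (Nat.pow_le_pow_right two_pos (by omega))
    _ = 2 ^ (n + S (2 * D)) * σ R := mul_comm _ _

lemma card_nearWords_le (u : List Bool) {n δ : ℕ} (hδ : δ ≤ n) (D : ℕ) :
    (#(nearWords X Z φ u n δ D) : ℝ) ≤ 2 ^ n * (2 ^ S (2 * D) * (σ (L * δ + E + D) / 2 ^ δ)) := by
  have h := (Nat.cast_le (α := ℝ)).2
    (card_nearWords_mul_le hX hfin hZ hup hlow u hδ D)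
  push_cast at h
  rw [pow_add] at h
  rw [← mul_div_assoc, ← mul_div_assoc, le_div_iff₀ (by positivity), ← mul_assoc]
  exact h

lemma exists_notMem_nearWords
    (hK : ∀ t : Finset ℕ, (∀ δ ∈ t, K < δ) →
      ∑ δ ∈ t, (2 : ℝ) ^ S 0 * (σ (L * δ + E) / 2 ^ δ) < 1 / 2)
    (u : List Bool) {n D : ℕ}
    (hn : (2 : ℝ) ^ S (2 * D) * (σ (L * n + E + D) / 2 ^ n) < 1 / 2) :
    ∃ a : Fin n → Bool, a ∉ nearWords X Z φ u n n D ∧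
      ∀ δ ∈ Ioc K n, a ∉ nearWords X Z φ u n δ 0 := by
  classical
  set bad := nearWords X Z φ u n n D ∪ (Ioc K n).biUnion fun δ => nearWords X Z φ u n δ 0
  have hmid : ∑ δ ∈ Ioc K n, (#(nearWords X Z φ u n δ 0) : ℝ) ≤
      2 ^ n * ∑ δ ∈ Ioc K n, (2 : ℝ) ^ S 0 * (σ (L * δ + E) / 2 ^ δ) := by
    rw [mul_sum]
    refine sum_le_sum fun δ hδ => ?_
    simpa using card_nearWords_le hX hfin hZ hup hlow u (mem_Ioc.1 hδ).2 0
  have hbad : (#bad : ℝ) < #(univ : Finset (Fin n → Bool)) := by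
    have hsplit : (#bad : ℝ) ≤ #(nearWords X Z φ u n n D) +
        ∑ δ ∈ Ioc K n, (#(nearWords X Z φ u n δ 0) : ℝ) := by
      exact_mod_cast (card_union_le _ _).trans (Nat.add_le_add_left card_biUnion_le _)
    have hend := card_nearWords_le hX hfin hZ hup hlow u (n := n) le_rfl D
    have htail := hK (Ioc K n) fun δ hδ => (mem_Ioc.1 hδ).1
    have hpow : (0 : ℝ) < 2 ^ n := by positivity
    simp only [card_univ, Fintype.card_fun, Fintype.card_bool, Fintype.card_fin, Nat.cast_pow,
      Nat.cast_ofNat]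
    nlinarith
  obtain ⟨a, -, ha⟩ := exists_mem_notMem_of_card_lt_card (by exact_mod_cast hbad)
  exact ⟨a, fun h => ha (mem_union_left _ h),
    fun δ hδ h => ha (mem_union_right _ (mem_biUnion.2 ⟨δ, hδ, h⟩))⟩

lemma exists_append_far (hσ : Subexponential σ)
    (hK : ∀ t : Finset ℕ, (∀ δ ∈ t, K < δ) →
      ∑ δ ∈ t, (2 : ℝ) ^ S 0 * (σ (L * δ + E) / 2 ^ δ) < 1 / 2)
    {u : List Bool} (hu : ∀ k, φ (u.take k) ∉ Z)
    (hfar : ∀ z ∈ Z, L * K + E < X.dist (φ u) z) (D : ℕ) :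
    ∃ x ≠ [], (∀ k, φ ((u ++ x).take k) ∉ Z) ∧ ∀ z ∈ Z, D < X.dist (φ (u ++ x)) z := by
  obtain ⟨n, hn, hKn⟩ := ((((hσ.summable_div_two_pow L (E + D)).mul_left
    (2 ^ S (2 * D))).tendsto_atTop_zero.eventually (gt_mem_nhds one_half_pos)).and
    (Filter.eventually_gt_atTop K)).exists
  obtain ⟨a, ha_end, ha_mid⟩ :=
    exists_notMem_nearWords hX hfin hZ hup hlow hK u (D := D) (by simpa [add_assoc] using hn)
  have hend : ∀ z ∈ Z, D < X.dist (φ (u ++ List.ofFn a)) z := fun z hz => by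
    by_contra! h
    have htake : (List.ofFn a).take n = List.ofFn a := List.take_of_length_le (by simp)
    exact ha_end (by simpa [nearWords, htake] using ⟨z, hz, h⟩)
  refine ⟨List.ofFn a, by simp; omega, ?_, hend⟩
  refine forall_take_append (P := fun w => φ w ∉ Z) hu fun δ hmem => ?_
  rcases le_or_gt δ K with hδK | hδK
  · have hstep := hup u (u ++ (List.ofFn a).take δ)
    rw [treeDist_self_append, List.length_take, List.length_ofFn] at hstep
    have := hfar _ hmem
    have : L * min δ n ≤ L * K := Nat.mul_le_mul_left L (min_le_of_left_le hδK)
    omega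
  rcases le_or_gt δ n with hδn | hδn
  · refine ha_mid δ (mem_Ioc.2 ⟨hδK, hδn⟩) ?_
    simp only [nearWords, mem_filter, mem_univ, true_and]
    exact ⟨_, hmem, by simp⟩
  · rw [List.take_of_length_le (by simp; omega)] at hmem
    simpa using hend _ hmem

end CoarseEmbedding

theorem ray_in_component_general (σ : ℕ → ℕ)
    (hσ : ∀ ε : ℝ, 0 < ε → ∃ R₀ : ℕ, ∀ R : ℕ, R₀ ≤ R → (σ R : ℝ) ≤ Real.exp (ε * R))
    (ρ : ℝ → ℝ) (hρ_mono : Monotone ρ)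
    (hρ_unbdd : ∀ M : ℝ, ∃ t : ℝ, 0 ≤ t ∧ M < ρ t)
    (lam c : ℝ) (N : ℕ) :
    ∃ Q : ℝ, 0 ≤ Q ∧
      ∀ (V : Type) (X : SimpleGraph V), X.Connected →
      (∀ v : V, (X.neighborSet v).Finite ∧ (X.neighborSet v).ncard ≤ N) →
      ∀ Z : Set V, (∀ (p : V) (R : ℕ), ({x ∈ Z | X.dist p x ≤ R}).ncard ≤ σ R) →
      ∀ φ : List Bool → V,
        (∀ u v : List Bool,
          ρ (treeDist u v : ℝ) ≤ (X.dist (φ u) (φ v) : ℝ) ∧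
          (X.dist (φ u) (φ v) : ℝ) ≤ lam * (treeDist u v : ℝ) + c) →
      (∀ z ∈ Z, Q ≤ (X.dist (φ []) z : ℝ)) →
      ∃ f : ℕ → Bool,
        (∀ n : ℕ, φ (List.ofFn fun i : Fin n => f i) ∉ Z) ∧
        (∀ M : ℝ, ∃ n : ℕ, ∀ z ∈ Z, M ≤ (X.dist (φ (List.ofFn fun i : Fin n => f i)) z : ℝ)) := by
  have hscale (D : ℕ) : ∃ s : ℕ, (D : ℝ) < ρ s := by
    obtain ⟨t, -, ht⟩ := hρ_unbdd D
    exact ⟨⌈t⌉₊, ht.trans_le (hρ_mono (Nat.le_ceil t))⟩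
  choose S hS using hscale
  set L := ⌈lam⌉₊
  set E := ⌈c⌉₊
  obtain ⟨K, hK⟩ := exists_sum_lt_of_summable
    ((Subexponential.summable_div_two_pow hσ L E).mul_left (2 ^ S 0)) one_half_pos
  refine ⟨(L * K + E + 1 : ℕ), Nat.cast_nonneg _, fun V X hX hdeg Z hZ φ hφ hroot => ?_⟩
  have hup (u v : List Bool) : X.dist (φ u) (φ v) ≤ L * treeDist u v + E := by
    have := (hφ u v).2.trans (add_le_add (mul_le_mul_of_nonneg_right (Nat.le_ceil lam)
      (Nat.cast_nonneg _)) (Nat.le_ceil c))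
    exact_mod_cast this
  have hlow (u v : List Bool) (D : ℕ) (h : X.dist (φ u) (φ v) ≤ D) : treeDist u v < S D := by
    by_contra! hs
    have := (hS D).trans_le ((hρ_mono (Nat.cast_le.2 hs)).trans (hφ u v).1)
    exact this.not_ge (by exact_mod_cast h)
  have hroot' : ∀ z ∈ Z, L * K + E + 0 < X.dist (φ []) z := fun z hz => by
    exact_mod_cast (hroot z hz)
  obtain ⟨f, hf⟩ := exists_ray_of_forall_exists_append
    (fun j w => (∀ k, φ (w.take k) ∉ Z) ∧ ∀ z ∈ Z, L * K + E + j < X.dist (φ w) z)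
    ⟨fun k hk => by
      have := hroot' _ (by simpa using hk)
      rw [SimpleGraph.dist_self] at this
      omega, hroot'⟩
    fun j w ⟨hw, hfar⟩ => exists_append_far hX (fun v => (hdeg v).1) hZ hup hlow hσ hK hw
      (fun z hz => by have := hfar z hz; omega) (L * K + E + (j + 1))
  refine ⟨f, fun n => ?_, fun M => ?_⟩
  · obtain ⟨m, hnm, hm, -⟩ := hf n
    have h := hm n
    rwa [← Fin.ofFn_take_eq_take_ofFn hnm] at h
  · obtain ⟨m, -, -, hm⟩ := hf ⌈M⌉₊
    refine ⟨m, fun z hz => (Nat.le_ceil M).trans ?_⟩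
    have := hm z hz
    exact_mod_cast (by omega : ⌈M⌉₊ ≤ X.dist (φ (List.ofFn fun i : Fin m => f i)) z)

/-- Let `σ` be subexponential, `ρ` increasing and unbounded, `λ ≥ 1`, `c ≥ 0`, `N ∈ ℕ`.
There exists `Q ≥ 0` such that: in any connected graph of degree `≤ N`, for any vertex set
`Z` of growth `≤ σ` and any coarse embedding `φ` of the rooted binary tree `T₂` with lower
control `ρ` and upper control `t ↦ λt + c`, if the root is sent at distance `≥ Q` from
`Z`, then some geodesic ray from the root is sent disjointly from `Z` and unboundedly far
from `Z`. -/
theorem ray_in_component (σ : ℕ → ℕ)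
    (hσ : ∀ ε : ℝ, 0 < ε → ∃ R₀ : ℕ, ∀ R : ℕ, R₀ ≤ R → (σ R : ℝ) ≤ Real.exp (ε * R))
    (ρ : ℝ → ℝ) (hρ_mono : Monotone ρ) (hρ_nonneg : ∀ t : ℝ, 0 ≤ t → 0 ≤ ρ t)
    (hρ_unbdd : ∀ M : ℝ, ∃ t : ℝ, 0 ≤ t ∧ M < ρ t)
    (lam c : ℝ) (hlam : 1 ≤ lam) (hc : 0 ≤ c) (N : ℕ) :
    ∃ Q : ℝ, 0 ≤ Q ∧
      ∀ (V : Type) (X : SimpleGraph V), X.Connected →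
      (∀ v : V, (X.neighborSet v).Finite ∧ (X.neighborSet v).ncard ≤ N) →
      ∀ Z : Set V, (∀ (p : V) (R : ℕ), ({x ∈ Z | X.dist p x ≤ R}).ncard ≤ σ R) →
      ∀ φ : List Bool → V,
        (∀ u v : List Bool,
          ρ (treeDist u v : ℝ) ≤ (X.dist (φ u) (φ v) : ℝ) ∧
          (X.dist (φ u) (φ v) : ℝ) ≤ lam * (treeDist u v : ℝ) + c) →
      (∀ z ∈ Z, Q ≤ (X.dist (φ []) z : ℝ)) →
      ∃ f : ℕ → Bool,
        (∀ n : ℕ, φ (List.ofFn fun i : Fin n => f i) ∉ Z) ∧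
        (∀ M : ℝ, ∃ n : ℕ, ∀ z ∈ Z, M ≤ (X.dist (φ (List.ofFn fun i : Fin n => f i)) z : ℝ)) :=
  ray_in_component_general σ hσ ρ hρ_mono hρ_unbdd lam c N
end

section
/- Let G be a finite unpinched graph and let Q be a set of vertices of G such that the subgraph of G induced by Q is unpinched. If Q separates G, then for every connected component C of the subgraph induced by V(G) ∖ Q, the subgraph of G induced by C ∪ Q is unpinched. In particular, G then satisfies: there exist a set K of vertices and a partition of V(G) ∖ K into p ≥ 2 nonempty parts G₁, …, G_p such that K separates G, no edge joins distinct parts, and each subgraph induced by Gᵢ ∪ K is unpinched. -/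
/-- A set `K` of vertices separates the graph `G` if two vertices outside `K` cannot be
joined within the subgraph induced on the complement of `K`. -/
def Separates {V : Type*} (G : SimpleGraph V) (K : Set V) : Prop :=
  ∃ x y : (Kᶜ : Set V), ¬ (G.induce (Kᶜ : Set V)).Reachable x y

/-- A graph is unpinched if it is not complete and no clique separates it. -/
def Unpinched {V : Type*} (G : SimpleGraph V) : Prop :=
  (¬ ∀ u v : V, u ≠ v → G.Adj u v) ∧ ∀ K : Set V, G.IsClique K → ¬ Separates G K

/-! If `A` is a set of vertices with no neighbours outside `A ∪ Q` (a component of `G - Q`,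
or the union of the others), then `G[A ∪ Q]` is unpinched. It is not complete since `G[Q]` is
not. Given a clique `K`, the set `Q \ K` is nonempty and connected because `G[Q]` is unpinched,
and every vertex of `(A ∪ Q) \ K` has a path to it in `G - K` because `G` is unpinched; up to
its first vertex in `Q` such a path stays inside `A`, so it lies in `(A ∪ Q) \ K`. Splitting
`V ∖ Q` into one component and the union of the others gives the partition. -/

namespace SimpleGraph

variable {V : Type*} {G : SimpleGraph V}

noncomputable def induceInduceIso (s : Set V) (t : Set s) :
    (G.induce s).induce t ≃g G.induce (Subtype.val '' t) where
  toEquiv := Equiv.Set.image Subtype.val t Subtype.val_injective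
  map_rel_iff' := Iff.rfl

theorem preconnected_induce_of_forall_reachable {s t : Set V} (hts : t ⊆ s)
    (ht : (G.induce t).Preconnected)
    (h : ∀ x : s, ∃ y : t, (G.induce s).Reachable x (Set.inclusion hts y)) :
    (G.induce s).Preconnected := by
  intro x z
  obtain ⟨x', hx⟩ := h x
  obtain ⟨z', hz⟩ := h z
  exact hx.trans (((ht x' z').map (induceHomOfLE G hts).toHom).trans hz.symm)

theorem Walk.exists_mem_reachable_induce {s t u : Set V}
    (hs : ∀ a ∈ s \ t, ∀ b ∈ u, G.Adj a b → b ∈ s) {x y : u}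
    (p : (G.induce u).Walk x y) (hx : x.1 ∈ s) (hy : y.1 ∈ t) :
    ∃ w : s, w.1 ∈ t ∧ (G.induce s).Reachable ⟨x, hx⟩ w := by
  induction p with
  | nil => exact ⟨⟨_, hx⟩, hy, .rfl⟩
  | @cons x z y hxz p ih =>
    by_cases hxt : x.1 ∈ t
    · exact ⟨⟨_, hx⟩, hxt, .rfl⟩
    · have hz : z.1 ∈ s := hs x ⟨hx, hxt⟩ z z.2 hxz
      obtain ⟨w, hwt, hzw⟩ := ih hz hy
      have hxz' : (G.induce s).Adj ⟨x, hx⟩ ⟨z, hz⟩ := hxz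
      exact ⟨w, hwt, hxz'.reachable.trans hzw⟩

theorem ConnectedComponent.adj_mem_image_supp_or_mem {Q : Set V}
    (c : (G.induce Qᶜ).ConnectedComponent) :
    ∀ a ∈ Subtype.val '' c.supp, ∀ b, G.Adj a b → b ∈ Subtype.val '' c.supp ∪ Q := by
  rintro _ ⟨a, ha, rfl⟩ b hab
  by_cases hb : b ∈ Q
  · exact .inr hb
  · refine .inl ⟨⟨b, hb⟩, ?_, rfl⟩
    rw [ConnectedComponent.mem_supp_iff] at ha ⊢
    exact ha ▸ ConnectedComponent.sound (Adj.reachable (G := G.induce Qᶜ) hab.symm)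

theorem adj_mem_compl_sdiff_or_mem {Q A : Set V} (hA : ∀ a ∈ A, ∀ b, G.Adj a b → b ∈ A ∪ Q) :
    ∀ a ∈ Qᶜ \ A, ∀ b, G.Adj a b → b ∈ Qᶜ \ A ∪ Q := by
  intro a ha b hab
  by_cases hb : b ∈ Q
  · exact .inr hb
  · refine .inl ⟨hb, fun hbA => ?_⟩
    exact (hA b hbA a hab.symm).elim ha.2 ha.1

end SimpleGraph

open SimpleGraph

section

variable {V : Type*} {G : SimpleGraph V}

theorem not_separates_iff_preconnected {K : Set V} :
    ¬ Separates G K ↔ (G.induce Kᶜ).Preconnected := by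
  simp [Separates, Preconnected]

theorem not_separates_induce_iff_preconnected {s : Set V} {K : Set s} :
    ¬ Separates (G.induce s) K ↔ (G.induce (s \ Subtype.val '' K)).Preconnected := by
  rw [not_separates_iff_preconnected, (induceInduceIso s Kᶜ).preconnected_iff,
    Set.image_compl_eq_range_sdiff_image Subtype.val_injective, Subtype.range_coe]

theorem unpinched_induce_iff {s : Set V} :
    Unpinched (G.induce s) ↔
      ¬ G.IsClique s ∧ ∀ K, G.IsClique K → (G.induce (s \ K)).Preconnected := by
  refine and_congr (by rw [← induce_eq_top, eq_top_iff_forall_ne_adj])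
    ⟨fun h K hK => ?_, fun h K hK => ?_⟩
  · have hK' : (G.induce s).IsClique (Subtype.val ⁻¹' K) :=
      isClique_induce_iff.2 (hK.subset (Set.image_preimage_subset _ _))
    have := not_separates_induce_iff_preconnected.1 (h _ hK')
    rwa [Subtype.image_preimage_coe, Set.sdiff_self_inter] at this
  · exact not_separates_induce_iff_preconnected.2 (h _ (isClique_induce_iff.1 hK))

theorem Unpinched.induce_union {Q A : Set V} (hG : Unpinched G) (hQ : Unpinched (G.induce Q))
    (hA : ∀ a ∈ A, ∀ b, G.Adj a b → b ∈ A ∪ Q) : Unpinched (G.induce (A ∪ Q)) := by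
  obtain ⟨hQ_not_clique, hQ_conn⟩ := unpinched_induce_iff.1 hQ
  refine unpinched_induce_iff.2 ⟨fun h => hQ_not_clique (h.subset Set.subset_union_right),
    fun K hK => ?_⟩
  obtain ⟨q, hqQ, hqK⟩ : (Q \ K).Nonempty :=
    Set.nonempty_of_not_subset fun hQK => hQ_not_clique (hK.subset hQK)
  refine preconnected_induce_of_forall_reachable
    (Set.sdiff_subset_sdiff_left Set.subset_union_right) (hQ_conn K hK) fun x => ?_
  obtain ⟨p⟩ := not_separates_iff_preconnected.1 (hG.2 K hK) ⟨x, x.2.2⟩ ⟨q, hqK⟩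
  have hclosed : ∀ a ∈ ((A ∪ Q) \ K) \ Q, ∀ b ∈ Kᶜ, G.Adj a b → b ∈ (A ∪ Q) \ K :=
    fun a ha b hbK hab => ⟨hA a (ha.1.1.resolve_right ha.2) b hab, hbK⟩
  obtain ⟨w, hwQ, hw⟩ := p.exists_mem_reachable_induce hclosed x.2 hqQ
  exact ⟨⟨w, hwQ, w.2.2⟩, hw⟩

end

theorem separating_unpinched_subgraph_general {V : Type*} (G : SimpleGraph V)
    (hG : Unpinched G) (Q : Set V) (hQ : Unpinched (G.induce Q))
    (hsep : Separates G Q) :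
    (∀ c : (G.induce (Qᶜ : Set V)).ConnectedComponent,
      Unpinched (G.induce ((Subtype.val '' c.supp) ∪ Q))) ∧
    (∃ (K : Set V) (p : ℕ) (P : Fin p → Set V),
      2 ≤ p ∧ Separates G K ∧
      (∀ i, (P i).Nonempty) ∧
      (∀ i j, i ≠ j → Disjoint (P i) (P j)) ∧
      (⋃ i, P i) = (Kᶜ : Set V) ∧
      (∀ i j, i ≠ j → ∀ x ∈ P i, ∀ y ∈ P j, ¬ G.Adj x y) ∧
      (∀ i, Unpinched (G.induce (P i ∪ K)))) := by
  refine ⟨fun c => hG.induce_union hQ c.adj_mem_image_supp_or_mem, ?_⟩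
  obtain ⟨x, y, hxy⟩ := hsep
  set A := Subtype.val '' ((G.induce Qᶜ).connectedComponentMk x).supp
  have hA : ∀ a ∈ A, ∀ b, G.Adj a b → b ∈ A ∪ Q := ConnectedComponent.adj_mem_image_supp_or_mem _
  have hAQ : A ⊆ Qᶜ := Subtype.coe_image_subset _ _
  have hxA : x.1 ∈ A := ⟨x, rfl, rfl⟩
  have hyA : y.1 ∉ A := fun hy =>
    hxy (ConnectedComponent.exact (Subtype.val_injective.mem_set_image.1 hy)).symm
  have hA_nonadj : ∀ a ∈ A, ∀ b ∈ Qᶜ \ A, ¬ G.Adj a b :=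
    fun a ha b hb hab => (hA a ha b hab).elim hb.2 hb.1
  have hunion : ⋃ i, ![A, Qᶜ \ A] i = Qᶜ := by
    ext z
    simp only [Set.mem_iUnion, Fin.exists_fin_two, Matrix.cons_val_zero, Matrix.cons_val_one,
      ← Set.mem_union, Set.union_sdiff_cancel hAQ]
  refine ⟨Q, 2, ![A, Qᶜ \ A], le_rfl, ⟨x, y, hxy⟩, ?_, ?_, hunion, ?_, ?_⟩ <;>
    simp only [Fin.forall_fin_two, Matrix.cons_val_zero, Matrix.cons_val_one, ne_eq,
      not_true_eq_false, false_imp_iff, true_and, and_true, zero_ne_one, one_ne_zero,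
      not_false_eq_true, forall_const]
  · exact ⟨⟨x, hxA⟩, ⟨y, y.2, hyA⟩⟩
  · exact ⟨Set.disjoint_sdiff_right, Set.disjoint_sdiff_left⟩
  · exact ⟨hA_nonadj, fun a ha b hb hab => hA_nonadj b hb a ha hab.symm⟩
  · exact ⟨hG.induce_union hQ hA, hG.induce_union hQ (adj_mem_compl_sdiff_or_mem hA)⟩

/-- If a finite unpinched graph `G` is separated by a set `Q` inducing an unpinched
subgraph, then for every connected component `C` of the complement of `Q` the subgraph
induced by `C ∪ Q` is unpinched; in particular, `G` is separated by a set `K` with a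
partition of the complement into at least two pieces, each piece plus `K` being unpinched
and with no edges between distinct pieces. -/
theorem separating_unpinched_subgraph {V : Type*} [Fintype V] (G : SimpleGraph V)
    (hG : Unpinched G) (Q : Set V) (hQ : Unpinched (G.induce Q))
    (hsep : Separates G Q) :
    (∀ c : (G.induce (Qᶜ : Set V)).ConnectedComponent,
      Unpinched (G.induce ((Subtype.val '' c.supp) ∪ Q))) ∧
    (∃ (K : Set V) (p : ℕ) (P : Fin p → Set V),
      2 ≤ p ∧ Separates G K ∧
      (∀ i, (P i).Nonempty) ∧
      (∀ i j, i ≠ j → Disjoint (P i) (P j)) ∧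
      (⋃ i, P i) = (Kᶜ : Set V) ∧
      (∀ i j, i ≠ j → ∀ x ∈ P i, ∀ y ∈ P j, ¬ G.Adj x y) ∧
      (∀ i, Unpinched (G.induce (P i ∪ K)))) :=
  separating_unpinched_subgraph_general G hG Q hQ hsep
end

section
/- Let Γ be a finite simple graph and let G be a set of vertices of Γ such that the subgraph of Γ induced by G is unpinched. Let v₀, v₁, …, v_m be an induced path in Γ (so m ≥ 2) whose endpoints v₀ and v_m belong to G and are non-adjacent in Γ, and whose interior vertices v₁, …, v_{m−1} do not belong to G. Then the subgraph of Γ induced by G ∪ {v₀, v₁, …, v_m} is unpinched. -/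
/-!
Write `S = G ∪ {v₀, …, v_m}` and let `K` be a clique of `Γ[S]`. Its trace on `G` is a clique of
`Γ[G]`, so `Γ[G] - K` is connected. Since the path is induced, `K` meets it in at most two
consecutive vertices; hence every path vertex outside `K` can walk along the path, avoiding `K`,
to `v₀` or to `v_m`, which lie in `G`. So `Γ[S] - K` is connected. Noncompleteness of `Γ[S]` is
inherited from `Γ[G]`.
-/

open SimpleGraph

section

variable {U W : Type*} {G : SimpleGraph U} {H : SimpleGraph W} {K : Set W} {m : ℕ}

lemma not_separates_iff_preconnected_s12 : ¬ Separates H K ↔ (H.induce Kᶜ).Preconnected := by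
  simp only [Separates, not_exists, not_not]
  rfl

lemma Unpinched.of_embedding (f : G ↪g H) (hG : Unpinched G)
    (hcover : ∀ K, H.IsClique K → ∀ x : (Kᶜ : Set W),
      ∃ u, ∃ hu : f u ∉ K, (H.induce Kᶜ).Reachable x ⟨f u, hu⟩) :
    Unpinched H := by
  refine ⟨fun hH => hG.1 fun u w huw => f.map_adj_iff.1 (hH _ _ (f.injective.ne huw)),
    fun K hK => not_separates_iff_preconnected_s12.2 fun x y => ?_⟩
  have hKG : G.IsClique (f ⁻¹' K) := fun a ha b hb hab =>
    f.map_adj_iff.1 (hK ha hb (f.injective.ne hab))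
  have hpre := not_separates_iff_preconnected_s12.1 (hG.2 _ hKG)
  let g : G.induce (f ⁻¹' K)ᶜ →g H.induce Kᶜ := induceHom f.toHom fun _ hu => hu
  obtain ⟨u, hu, hxu⟩ := hcover K hK x
  obtain ⟨w, hw, hyw⟩ := hcover K hK y
  exact hxu.trans (((hpre ⟨u, hu⟩ ⟨w, hw⟩).map g).trans hyw.symm)

lemma reachable_of_forall_mem_Icc_notMem (p : pathGraph (m + 1) →g H) {a b : Fin (m + 1)}
    (hab : a ≤ b) (h : ∀ j, a ≤ j → j ≤ b → p j ∉ K) :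
    (H.induce Kᶜ).Reachable ⟨p a, h a le_rfl hab⟩ ⟨p b, h b hab le_rfl⟩ := by
  induction b using Fin.induction with
  | zero =>
    obtain rfl := le_antisymm hab a.zero_le
    rfl
  | succ b ih =>
    rcases hab.eq_or_lt with rfl | hlt
    · rfl
    · have hb : a ≤ b.castSucc := Fin.le_castSucc_iff.2 hlt
      exact (ih hb fun j hj hjb => h j hj (hjb.trans b.castSucc_le_succ)).trans
        (induce_adj.2 (p.map_adj (pathGraph_adj.2 (Or.inl rfl)))).reachable

lemma SimpleGraph.IsClique.val_le_succ_of_pathGraph (p : pathGraph (m + 1) ↪g H) (hK : H.IsClique K)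
    {i j : Fin (m + 1)} (hi : p i ∈ K) (hj : p j ∈ K) : (i : ℕ) ≤ j + 1 := by
  rcases eq_or_ne i j with rfl | hij
  · omega
  · have := pathGraph_adj.1 (p.map_adj_iff.1 (hK hi hj (p.injective.ne hij)))
    omega

lemma SimpleGraph.IsClique.reachable_pathGraph_zero_or_last (p : pathGraph (m + 1) ↪g H) (hK : H.IsClique K)
    {i : Fin (m + 1)} (hi : p i ∉ K) :
    (∃ h0 : p 0 ∉ K, (H.induce Kᶜ).Reachable ⟨p 0, h0⟩ ⟨p i, hi⟩) ∨
      ∃ hl : p (Fin.last m) ∉ K, (H.induce Kᶜ).Reachable ⟨p i, hi⟩ ⟨p (Fin.last m), hl⟩ := by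
  by_cases hleft : ∃ j ≤ i, p j ∈ K
  · obtain ⟨j, hji, hj⟩ := hleft
    have hright : ∀ k, i ≤ k → p k ∉ K := fun k hik hk => by
      have hkj := hK.val_le_succ_of_pathGraph p hk hj
      have hjk := hK.val_le_succ_of_pathGraph p hj hk
      have hne_j : (j : ℕ) ≠ i := Fin.val_ne_iff.2 fun h => hi (h ▸ hj)
      have hne_k : (k : ℕ) ≠ i := Fin.val_ne_iff.2 fun h => hi (h ▸ hk)
      rw [Fin.le_iff_val_le_val] at hji hik
      omega
    exact .inr ⟨_, reachable_of_forall_mem_Icc_notMem p.toHom i.le_last fun k hk _ => hright k hk⟩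
  · exact .inl ⟨_, reachable_of_forall_mem_Icc_notMem p.toHom i.zero_le
      fun j _ hj hjK => hleft ⟨j, hj, hjK⟩⟩

end

theorem adding_path_to_unpinched_general {V : Type*} (Γ : SimpleGraph V)
    (G : Set V) (hG : Unpinched (Γ.induce G))
    (m : ℕ) (v : Fin (m + 1) → V) (hinj : Function.Injective v)
    (hpath : ∀ i j : Fin (m + 1), Γ.Adj (v i) (v j) ↔ ((i : ℕ) + 1 = j ∨ (j : ℕ) + 1 = i))
    (h0 : v 0 ∈ G) (hlast : v (Fin.last m) ∈ G) :
    Unpinched (Γ.induce (G ∪ Set.range v)) := by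
  let p : pathGraph (m + 1) ↪g Γ.induce (G ∪ Set.range v) :=
    ⟨⟨fun i => ⟨v i, .inr ⟨i, rfl⟩⟩, fun i j h => hinj (congrArg Subtype.val h)⟩,
      fun {i j} => (hpath i j).trans pathGraph_adj.symm⟩
  refine hG.of_embedding (Γ.induceHomOfLE Set.subset_union_left) fun K hK x => ?_
  obtain ⟨⟨x, hxG | ⟨i, rfl⟩⟩, hxK⟩ := x
  · exact ⟨⟨x, hxG⟩, hxK, .rfl⟩
  · rcases hK.reachable_pathGraph_zero_or_last p hxK with ⟨h0K, hr⟩ | ⟨hlK, hr⟩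
    · exact ⟨⟨v 0, h0⟩, h0K, hr.symm⟩
    · exact ⟨⟨v (Fin.last m), hlast⟩, hlK, hr⟩

/-- Adding an induced path with non-adjacent endpoints in `G` and interior outside `G` to
an induced unpinched subgraph `G` of `Γ` yields an induced unpinched subgraph. -/
theorem adding_path_to_unpinched {V : Type*} [Fintype V] (Γ : SimpleGraph V)
    (G : Set V) (hG : Unpinched (Γ.induce G))
    (m : ℕ) (hm : 2 ≤ m) (v : Fin (m + 1) → V) (hinj : Function.Injective v)
    (hpath : ∀ i j : Fin (m + 1), Γ.Adj (v i) (v j) ↔ ((i : ℕ) + 1 = j ∨ (j : ℕ) + 1 = i))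
    (h0 : v 0 ∈ G) (hlast : v (Fin.last m) ∈ G)
    (hends : ¬ Γ.Adj (v 0) (v (Fin.last m)))
    (hint : ∀ i : Fin (m + 1), i ≠ 0 → i ≠ Fin.last m → v i ∉ G) :
    Unpinched (Γ.induce (G ∪ Set.range v)) :=
  adding_path_to_unpinched_general Γ G hG m v hinj hpath h0 hlast
end

section
/- Let Γ be a finite simple graph and let G be a set of vertices of Γ such that the subgraph of Γ induced by G is unpinched. Let v be a vertex of Γ not in G such that the set N(v) ∩ G of neighbours of v lying in G is not a clique, i.e., there exist two distinct non-adjacent vertices of G both adjacent to v. Then the subgraph of Γ induced by G ∪ {v} is unpinched. -/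
/-! The trace of a clique `K` of `Γ[G ∪ {v}]` on `G` is a clique of `Γ[G]`, so it does not
separate `Γ[G]`: the vertices of `G` outside `K` are mutually reachable avoiding `K`. The two
non-adjacent neighbours of `v` in `G` cannot both lie in the clique `K`, so `v`, if outside `K`,
is joined to one of them; hence `K` does not separate `Γ[G ∪ {v}]` either. -/

section

open SimpleGraph

variable {W W' : Type*} {H : SimpleGraph W} {H' : SimpleGraph W'}

theorem SimpleGraph.IsClique.preimage_embedding (f : H ↪g H') {K : Set W'} (hK : H'.IsClique K) :
    H.IsClique (f ⁻¹' K) :=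
  fun _ hx _ hy hxy => f.map_adj_iff.mp (hK hx hy (f.injective.ne hxy))

theorem Unpinched.reachable_induce_compl (hH : Unpinched H) {K : Set W} (hK : H.IsClique K)
    (x y : (Kᶜ : Set W)) : (H.induce Kᶜ).Reachable x y := by
  by_contra hxy
  exact hH.2 K hK ⟨x, y, hxy⟩

theorem Unpinched.reachable_induce_compl_of_embedding (f : H ↪g H') (hH : Unpinched H)
    {K : Set W'} (hK : H'.IsClique K) {x y : W} (hx : f x ∉ K) (hy : f y ∉ K) :
    (H'.induce Kᶜ).Reachable ⟨f x, hx⟩ ⟨f y, hy⟩ :=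
  (hH.reachable_induce_compl (hK.preimage_embedding f) ⟨x, hx⟩ ⟨y, hy⟩).map
    (induceHom (s := (f ⁻¹' K)ᶜ) (t := Kᶜ) f.toHom fun _ h => h)

theorem Unpinched.of_embedding_s13 (f : H ↪g H') (hH : Unpinched H)
    (hext : ∀ w, w ∉ Set.range f →
      ∃ a b, a ≠ b ∧ H'.Adj w (f a) ∧ H'.Adj w (f b) ∧ ¬ H.Adj a b) :
    Unpinched H' := by
  refine ⟨fun hcomplete => hH.1 fun u v huv =>
    f.map_adj_iff.mp (hcomplete _ _ (f.injective.ne huv)), fun K hK ⟨x, y, hxy⟩ => hxy ?_⟩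
  have reach_image : ∀ z : (Kᶜ : Set W'),
      ∃ (u : W) (hu : f u ∉ K), (H'.induce Kᶜ).Reachable z ⟨f u, hu⟩ := by
    rintro ⟨z, hz⟩
    by_cases hzf : z ∈ Set.range f
    · obtain ⟨u, rfl⟩ := hzf
      exact ⟨u, hz, .rfl⟩
    obtain ⟨a, b, hab, hza, hzb, hnab⟩ := hext z hzf
    by_cases ha : f a ∈ K
    · have hb : f b ∉ K := fun hb =>
        hnab (f.map_adj_iff.mp (hK ha hb (f.injective.ne hab)))
      exact ⟨b, hb, Adj.reachable (G := H'.induce Kᶜ) hzb⟩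
    · exact ⟨a, ha, Adj.reachable (G := H'.induce Kᶜ) hza⟩
  obtain ⟨u, hu, hxu⟩ := reach_image x
  obtain ⟨u', hu', hyu'⟩ := reach_image y
  exact hxu.trans ((hH.reachable_induce_compl_of_embedding f hK hu hu').trans hyu'.symm)

end

theorem adding_vertex_to_unpinched_general {V : Type*} (Γ : SimpleGraph V)
    (G : Set V) (hG : Unpinched (Γ.induce G)) (v : V)
    (hN : ∃ a ∈ G, ∃ b ∈ G, a ≠ b ∧ Γ.Adj v a ∧ Γ.Adj v b ∧ ¬ Γ.Adj a b) :
    Unpinched (Γ.induce (insert v G)) := by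
  obtain ⟨a, haG, b, hbG, hab, hva, hvb, hnab⟩ := hN
  refine hG.of_embedding_s13 (Γ.induceHomOfLE (Set.subset_insert v G)) fun ⟨w, hw⟩ hwf => ?_
  obtain rfl : w = v :=
    (Set.mem_insert_iff.mp hw).resolve_right fun hwG => hwf ⟨⟨w, hwG⟩, rfl⟩
  exact ⟨⟨a, haG⟩, ⟨b, hbG⟩, fun h => hab (congrArg Subtype.val h), hva, hvb, hnab⟩

/-- Adding a vertex `v ∉ G` whose neighbourhood in `G` is not a clique to an induced
unpinched subgraph `G` of `Γ` yields an induced unpinched subgraph. -/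
theorem adding_vertex_to_unpinched {V : Type*} [Fintype V] (Γ : SimpleGraph V)
    (G : Set V) (hG : Unpinched (Γ.induce G)) (v : V) (hv : v ∉ G)
    (hN : ∃ a ∈ G, ∃ b ∈ G, a ≠ b ∧ Γ.Adj v a ∧ Γ.Adj v b ∧ ¬ Γ.Adj a b) :
    Unpinched (Γ.induce (insert v G)) :=
  adding_vertex_to_unpinched_general Γ G hG v hN
end
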